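/- Let P = {Γ₁, Γ₂, …} be an infinite path in covtree and suppose Γₙ ∈ P is not a singleton. Then there exists m > n and an m-order C such that C is a certificate of Γₙ and C ∈ Γₘ, where Γₘ is the node of P at level m. -/

import Mathlib

/-- A finite labeled order: a partial order structure on `Fin n`. -/
abbrev FinOrd (n : ℕ) := PartialOrder (Fin n)

/-- Isomorphism of two orders on `Fin n`. -/
def OrdIso {n : ℕ} (p q : FinOrd n) : Prop :=
  Nonempty (p.le ≃r q.le)

instance ordSetoid (n : ℕ) : Setoid (FinOrd n) where
  r := OrdIso
  iseqv := by
    refine ⟨fun p => ⟨RelIso.refl _⟩, ?_, ?_⟩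
    · rintro p q ⟨e⟩; exact ⟨e.symm⟩
    · rintro p q r ⟨e⟩ ⟨f⟩; exact ⟨e.trans f⟩

/-- An `n`-order: an isomorphism class of partial orders of cardinality `n`. -/
def NOrder (n : ℕ) := Quotient (ordSetoid n)

/-- `B` (a partial order on `Fin n`) occurs as a stem (finite downward-closed
subcauset) in the partial order `p` on `α`. -/
def StemIn {n : ℕ} {α : Type*} (B : FinOrd n) (p : PartialOrder α) : Prop :=
  ∃ f : Fin n → α, Function.Injective f ∧
    (∀ i j : Fin n, B.le i j ↔ p.le (f i) (f j)) ∧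
    (∀ (i : Fin n) (y : α), p.lt y (f i) → ∃ j : Fin n, f j = y)

/-- The `n`-order `B` is a stem in the order `p`. -/
def QStemIn {n : ℕ} {α : Type*} (B : NOrder n) (p : PartialOrder α) : Prop :=
  ∃ b : FinOrd n, ⟦b⟧ = B ∧ StemIn b p

/-- The set of `k`-stems of `p`, as a set of `k`-orders. -/
def stems (k : ℕ) {α : Type*} (p : PartialOrder α) : Set (NOrder k) :=
  {B | QStemIn B p}

/-- Stem relation between unlabeled finite orders: `S` is a stem in `T`. -/
def NStemIn {n m : ℕ} (S : NOrder n) (T : NOrder m) : Prop :=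
  ∃ t : FinOrd m, ⟦t⟧ = T ∧ QStemIn S t

/-- An order is past-finite if every element has finitely many elements below it. -/
def PastFinite {α : Type*} (p : PartialOrder α) : Prop :=
  ∀ x : α, {y : α | p.lt y x}.Finite

/-- The operation sending a set of `n`-orders to the set of `(n-1)`-stems of its
elements. -/
def Ominus (n : ℕ) (Γ : Set (NOrder n)) : Set (NOrder (n - 1)) :=
  {B | ∃ A ∈ Γ, NStemIn B A}

/-- The `j`-fold iterate of `Ominus`. -/
def OminusIter : (j : ℕ) → (n : ℕ) → Set (NOrder n) → Set (NOrder (n - j))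
  | 0, _, Γ => Γ
  | j + 1, n, Γ => Ominus (n - j) (OminusIter j n Γ)

/-- `Γ` is a node of covtree at level `n`: it is nonempty and has a certificate,
i.e. a (finite or countably infinite) past-finite order whose set of `n`-stems
is exactly `Γ`. -/
def IsNode (n : ℕ) (Γ : Set (NOrder n)) : Prop :=
  Γ.Nonempty ∧ ∃ (α : Type) (p : PartialOrder α), Countable α ∧ PastFinite p ∧
    stems n p = Γ


/-- An infinite path in covtree, starting at the root: for each `n` a node of
covtree at level `n` (a nonempty set of `n`-orders admitting a certificate),
each node being directly below the next via the `O₋` operation.  (Level `0`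
carries the trivial node consisting of the empty order.) -/
structure CovPath where
  node : (n : ℕ) → Set (NOrder n)
  nonempty : ∀ n, (node n).Nonempty
  isNode : ∀ n, IsNode n (node n)
  link : ∀ n, Ominus (n + 1) (node (n + 1)) = node n


/-!
Past-finiteness lets every `n`-stem of a certificate `p` of the level-`m` node of the path grow
inside `p` to an `m`-stem, so `p` is also a certificate of every lower node of the path. Take
`m = n · |Γₙ|` and such a `p`: the union of one copy of each element of `Γₙ` inside `p` is a stem
`c` of `p` with at most `m` elements whose `n`-stems are exactly `Γₙ`. Hence `c` lies in the node
of the path at level `|c|`, and `|c| > n` because a stem of size at most `n` has at most one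
`n`-stem, whereas `Γₙ` is not a singleton.
-/

open Function

instance finite_finOrd (n : ℕ) : Finite (FinOrd n) :=
  Finite.of_injective (fun p : FinOrd n => p.le) fun _ _ h => PartialOrder.ext (by simp [h])

instance finite_nOrder (n : ℕ) : Finite (NOrder n) := Quotient.finite _

section Stems

variable {α β : Type*} {n k : ℕ}

def IsStemMap (b : FinOrd n) (p : PartialOrder α) (f : Fin n → α) : Prop :=
  Injective f ∧ (∀ i j, b.le i j ↔ p.le (f i) (f j)) ∧ ∀ i y, p.lt y (f i) → ∃ j, f j = y

lemma stemIn_iff {b : FinOrd n} {p : PartialOrder α} : StemIn b p ↔ ∃ f, IsStemMap b p f :=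
  Iff.rfl

lemma IsStemMap.lt_iff {b : FinOrd n} {p : PartialOrder α} {f : Fin n → α}
    (hf : IsStemMap b p f) (i j : Fin n) : b.lt i j ↔ p.lt (f i) (f j) := by
  rw [b.lt_iff_le_not_ge, p.lt_iff_le_not_ge, hf.2.1, hf.2.1]

lemma IsStemMap.comp {b : FinOrd n} {t : FinOrd k} {p : PartialOrder α} {f : Fin n → Fin k}
    {g : Fin k → α} (hg : IsStemMap t p g) (hf : IsStemMap b t f) : IsStemMap b p (g ∘ f) := by
  refine ⟨hg.1.comp hf.1, fun i j => (hf.2.1 i j).trans (hg.2.1 _ _), fun i y hy => ?_⟩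
  obtain ⟨j, rfl⟩ := hg.2.2 (f i) y hy
  obtain ⟨l, rfl⟩ := hf.2.2 i j ((hg.lt_iff j (f i)).mpr hy)
  exact ⟨l, rfl⟩

lemma stemIn_refl (b : FinOrd n) : StemIn b b :=
  ⟨id, injective_id, fun _ _ => Iff.rfl, fun _ y _ => ⟨y, rfl⟩⟩

lemma StemIn.trans {b : FinOrd n} {t : FinOrd k} {p : PartialOrder α}
    (hbt : StemIn b t) (htp : StemIn t p) : StemIn b p := by
  obtain ⟨f, hf⟩ := stemIn_iff.mp hbt
  obtain ⟨g, hg⟩ := stemIn_iff.mp htp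
  exact ⟨g ∘ f, hg.comp hf⟩

lemma StemIn.stems_subset {t : FinOrd k} {p : PartialOrder α} (h : StemIn t p) :
    stems n t ⊆ stems n p := by
  rintro _ ⟨b, rfl, hb⟩
  exact ⟨b, rfl, hb.trans h⟩

lemma StemIn.of_relIso {b : FinOrd n} {p : PartialOrder α} {q : PartialOrder β}
    (h : StemIn b p) (e : p.le ≃r q.le) : StemIn b q := by
  obtain ⟨f, hinj, hle, hdown⟩ := h
  let _ : PartialOrder α := p
  let _ : PartialOrder β := q
  let e' : α ≃o β := e
  refine ⟨e' ∘ f, e'.injective.comp hinj, fun i j => (hle i j).trans e'.le_iff_le.symm,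
    fun i y hy => ?_⟩
  obtain ⟨j, hj⟩ := hdown i (e'.symm y) (e'.symm_apply_lt.mpr hy)
  exact ⟨j, by simp [hj]⟩

lemma StemIn.nonempty_relIso {b : FinOrd n} {c : FinOrd k} (h : StemIn b c) (hk : k ≤ n) :
    Nonempty (b.le ≃r c.le) := by
  obtain ⟨f, hinj, hle, -⟩ := h
  obtain rfl : n = k := le_antisymm (by simpa using Fintype.card_le_of_injective f hinj) hk
  exact ⟨⟨Equiv.ofBijective f (Finite.injective_iff_bijective.mp hinj), (hle _ _).symm⟩⟩

lemma stems_subsingleton_of_le (c : FinOrd k) (hk : k ≤ n) : (stems n c).Subsingleton := by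
  rintro _ ⟨b₁, rfl, h₁⟩ _ ⟨b₂, rfl, h₂⟩
  obtain ⟨e₁⟩ := h₁.nonempty_relIso hk
  obtain ⟨e₂⟩ := h₂.nonempty_relIso hk
  exact Quotient.sound ⟨e₁.trans e₂.symm⟩

lemma NStemIn.trans_qStemIn {B : NOrder n} {T : NOrder k} {p : PartialOrder α}
    (hBT : NStemIn B T) (hT : QStemIn T p) : QStemIn B p := by
  obtain ⟨t, rfl, b, rfl, hbt⟩ := hBT
  obtain ⟨t', ht', ht'p⟩ := hT
  obtain ⟨e⟩ := Quotient.exact ht'.symm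
  exact ⟨b, rfl, (hbt.of_relIso e).trans ht'p⟩

lemma NStemIn.trans {m : ℕ} {B : NOrder n} {T : NOrder k} {U : NOrder m}
    (hBT : NStemIn B T) (hTU : NStemIn T U) : NStemIn B U := by
  obtain ⟨u, rfl, hTu⟩ := hTU
  exact ⟨u, rfl, hBT.trans_qStemIn hTu⟩

lemma NStemIn.refl (B : NOrder n) : NStemIn B B := by
  obtain ⟨b, rfl⟩ := Quotient.exists_rep B
  exact ⟨b, rfl, b, rfl, stemIn_refl b⟩

lemma NStemIn.eq {B T : NOrder n} (h : NStemIn B T) : B = T := by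
  obtain ⟨t, rfl, hB⟩ := h
  exact stems_subsingleton_of_le t le_rfl hB ⟨t, rfl, stemIn_refl t⟩

end Stems

section DownClosed

variable {α : Type*} {n : ℕ} {p : PartialOrder α}

def IsDownClosed (p : PartialOrder α) (s : Finset α) : Prop :=
  ∀ x ∈ s, ∀ y, p.lt y x → y ∈ s

lemma IsDownClosed.union [DecidableEq α] {s t : Finset α} (hs : IsDownClosed p s)
    (ht : IsDownClosed p t) : IsDownClosed p (s ∪ t) := by
  intro x hx y hy
  rcases Finset.mem_union.mp hx with hx | hx
  · exact Finset.mem_union_left t (hs x hx y hy)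
  · exact Finset.mem_union_right s (ht x hx y hy)

lemma PastFinite.wellFounded (hp : PastFinite p) : WellFounded p.lt := by
  let _ : PartialOrder α := p
  refine Subrelation.wf (fun {y x} (hyx : y < x) => ?_) (measure fun x => (Set.Iio x).ncard).wf
  have hsub : Set.Iio y ⊂ Set.Iio x :=
    ⟨fun z hz => lt_trans hz hyx, fun h => lt_irrefl y (h hyx)⟩
  exact Set.ncard_lt_ncard hsub (hp x)

lemma pastFinite_of_finite [Finite α] (p : PartialOrder α) : PastFinite p :=
  fun _ => Set.toFinite _

/-- A minimal element outside `s` can be added to it. -/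
lemma IsDownClosed.exists_cons (hp : PastFinite p) {s : Finset α} (hs : IsDownClosed p s)
    (h : ∃ x, x ∉ s) : ∃ (x : α) (hx : x ∉ s), IsDownClosed p (s.cons x hx) := by
  obtain ⟨x, hx, hmin⟩ := hp.wellFounded.has_min {x | x ∉ s} h
  refine ⟨x, hx, fun z hz y hy => Finset.mem_cons.mpr (Or.inr ?_)⟩
  rcases Finset.mem_cons.mp hz with rfl | hz
  · by_contra hys
    exact hmin y hys hy
  · exact hs z hz y hy

lemma IsDownClosed.exists_superset_card (hp : PastFinite p) {s : Finset α}
    (hs : IsDownClosed p s) {m : ℕ} (hsm : s.card ≤ m) (hm : Nonempty (Fin m ↪ α)) :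
    ∃ t, s ⊆ t ∧ IsDownClosed p t ∧ t.card = m := by
  induction m, hsm using Nat.le_induction with
  | base => exact ⟨s, subset_rfl, hs, rfl⟩
  | succ m _ ih =>
    obtain ⟨e⟩ := hm
    obtain ⟨t, hst, ht, rfl⟩ := ih ⟨Fin.castSuccEmb.trans e⟩
    have hout : ∃ x, x ∉ t := by
      obtain ⟨x, -, hx⟩ :=
        Finset.exists_mem_notMem_of_card_lt_card (s := t) (t := Finset.univ.map e) (by simp)
      exact ⟨x, hx⟩
    obtain ⟨x, hx, hxt⟩ := ht.exists_cons hp hout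
    exact ⟨t.cons x hx, hst.trans (Finset.subset_cons hx), hxt, Finset.card_cons hx⟩

noncomputable def finsetEnum (s : Finset α) (i : Fin s.card) : α :=
  s.equivFin.symm i

lemma finsetEnum_injective (s : Finset α) : Injective (finsetEnum s) :=
  Subtype.val_injective.comp s.equivFin.symm.injective

lemma finsetEnum_mem (s : Finset α) (i : Fin s.card) : finsetEnum s i ∈ s :=
  (s.equivFin.symm i).2

lemma exists_finsetEnum_eq {s : Finset α} {x : α} (hx : x ∈ s) : ∃ i, finsetEnum s i = x :=
  ⟨s.equivFin ⟨x, hx⟩, by simp [finsetEnum]⟩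

noncomputable abbrev inducedOrder (p : PartialOrder α) (s : Finset α) : FinOrd s.card :=
  @PartialOrder.lift _ _ p (finsetEnum s) (finsetEnum_injective s)

lemma inducedOrder_le_iff {s : Finset α} {i j : Fin s.card} :
    (inducedOrder p s).le i j ↔ p.le (finsetEnum s i) (finsetEnum s j) :=
  Iff.rfl

lemma inducedOrder_lt_iff {s : Finset α} {i j : Fin s.card} :
    (inducedOrder p s).lt i j ↔ p.lt (finsetEnum s i) (finsetEnum s j) :=
  Iff.rfl

lemma IsDownClosed.isStemMap_inducedOrder {s : Finset α} (hs : IsDownClosed p s) :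
    IsStemMap (inducedOrder p s) p (finsetEnum s) :=
  ⟨finsetEnum_injective s, fun _ _ => Iff.rfl,
    fun i y hy => exists_finsetEnum_eq (hs _ (finsetEnum_mem s i) y hy)⟩

lemma IsDownClosed.stemIn_inducedOrder {s : Finset α} (hs : IsDownClosed p s) :
    StemIn (inducedOrder p s) p :=
  ⟨_, hs.isStemMap_inducedOrder⟩

lemma IsStemMap.isDownClosed_map {b : FinOrd n} {f : Fin n → α} (hf : IsStemMap b p f) :
    IsDownClosed p (Finset.univ.map ⟨f, hf.1⟩) := by
  intro x hx y hy
  obtain ⟨i, -, rfl⟩ := Finset.mem_map.mp hx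
  obtain ⟨j, rfl⟩ := hf.2.2 i y hy
  exact Finset.mem_map_of_mem _ (Finset.mem_univ j)

lemma IsStemMap.stemIn_inducedOrder {b : FinOrd n} {f : Fin n → α} (hf : IsStemMap b p f)
    {s : Finset α} (hfs : ∀ i, f i ∈ s) : StemIn b (inducedOrder p s) := by
  obtain ⟨hinj, hle, hdown⟩ := hf
  choose F hF using fun i => exists_finsetEnum_eq (hfs i)
  refine ⟨F, fun i j h => hinj (by rw [← hF i, ← hF j, h]), fun i j => ?_, fun i y hy => ?_⟩
  · rw [hle, inducedOrder_le_iff, hF, hF]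
  · rw [inducedOrder_lt_iff, hF] at hy
    obtain ⟨j, hj⟩ := hdown i _ hy
    exact ⟨j, finsetEnum_injective s (by rw [hF, hj])⟩

lemma StemIn.exists_between {k : ℕ} {b : FinOrd n} (hp : PastFinite p) (h : StemIn b p)
    (hnk : n ≤ k) (hk : Nonempty (Fin k ↪ α)) : ∃ t : FinOrd k, StemIn b t ∧ StemIn t p := by
  obtain ⟨f, hf⟩ := stemIn_iff.mp h
  obtain ⟨s, hsub, hs, rfl⟩ := hf.isDownClosed_map.exists_superset_card hp (by simpa using hnk) hk
  exact ⟨inducedOrder p s, hf.stemIn_inducedOrder fun i => hsub (by simp), hs.stemIn_inducedOrder⟩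

lemma exists_isDownClosed_stems_inducedOrder (Γ : Finset (NOrder n))
    (hΓ : ∀ B ∈ Γ, B ∈ stems n p) :
    ∃ s, IsDownClosed p s ∧ s.card ≤ n * Γ.card ∧ ∀ B ∈ Γ, B ∈ stems n (inducedOrder p s) := by
  classical
  induction Γ using Finset.induction_on with
  | empty => exact ⟨∅, fun _ h => absurd h (Finset.notMem_empty _), by simp, by simp⟩
  | insert B Γ hB ih =>
    obtain ⟨s, hs, hcard, hsΓ⟩ := ih fun C hC => hΓ C (Finset.mem_insert_of_mem hC)
    obtain ⟨b, hbB, hb⟩ := hΓ _ (Finset.mem_insert_self _ _)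
    obtain ⟨f, hf⟩ := stemIn_iff.mp hb
    set t := Finset.univ.map ⟨f, hf.1⟩
    have hst := hs.union hf.isDownClosed_map
    refine ⟨s ∪ t, hst, ?_, ?_⟩
    · calc (s ∪ t).card ≤ s.card + t.card := Finset.card_union_le s t
        _ ≤ n * Γ.card + n := by simpa [t] using hcard
        _ = n * (insert B Γ).card := by rw [Finset.card_insert_of_notMem hB]; ring
    · have hmono : stems n (inducedOrder p s) ⊆ stems n (inducedOrder p (s ∪ t)) :=
        (hs.isStemMap_inducedOrder.stemIn_inducedOrder fun i =>
          Finset.mem_union_left t (finsetEnum_mem s i)).stems_subset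
      intro C hC
      rcases Finset.mem_insert.mp hC with rfl | hC
      · exact ⟨b, hbB, hf.stemIn_inducedOrder fun i => Finset.mem_union_right s (by simp [t])⟩
      · exact hmono (hsΓ C hC)

end DownClosed

namespace CovPath

variable (P : CovPath) {n m : ℕ}

lemma mem_node_of_nstemIn (hnm : n ≤ m) {B : NOrder n} {T : NOrder m} (hT : T ∈ P.node m)
    (hBT : NStemIn B T) : B ∈ P.node n := by
  induction m, hnm using Nat.le_induction with
  | base => exact hBT.eq ▸ hT
  | succ m hnm ih =>
    obtain ⟨t, rfl, b, rfl, hbt⟩ := hBT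
    obtain ⟨b', hbb', hb't⟩ :=
      hbt.exists_between (pastFinite_of_finite t) hnm ⟨Fin.castSuccEmb⟩
    have hb' : (⟦b'⟧ : NOrder m) ∈ P.node m := P.link m ▸ ⟨_, hT, t, rfl, b', rfl, hb't⟩
    exact ih hb' ⟨b', rfl, b, rfl, hbb'⟩

lemma exists_nstemIn_of_mem (hnm : n ≤ m) {B : NOrder n} (hB : B ∈ P.node n) :
    ∃ T ∈ P.node m, NStemIn B T := by
  induction m, hnm using Nat.le_induction with
  | base => exact ⟨B, hB, NStemIn.refl B⟩
  | succ m _ ih =>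
    obtain ⟨T, hT, hBT⟩ := ih
    rw [← P.link m] at hT
    obtain ⟨U, hU, hTU⟩ := hT
    exact ⟨U, hU, hBT.trans hTU⟩

lemma stems_eq_node (hnm : n ≤ m) {α : Type*} {p : PartialOrder α} (hp : PastFinite p)
    (hpm : stems m p = P.node m) : stems n p = P.node n := by
  refine Set.Subset.antisymm ?_ fun B hB => ?_
  · rintro B ⟨b, rfl, hb⟩
    have hm : Nonempty (Fin m ↪ α) := by
      obtain ⟨T, hT⟩ := P.nonempty m
      rw [← hpm] at hT
      obtain ⟨-, -, f, hf, -⟩ := hT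
      exact ⟨⟨f, hf⟩⟩
    obtain ⟨t, hbt, htp⟩ := hb.exists_between hp hnm hm
    exact P.mem_node_of_nstemIn hnm (hpm ▸ ⟨t, rfl, htp⟩) ⟨t, rfl, b, rfl, hbt⟩
  · obtain ⟨T, hT, hBT⟩ := P.exists_nstemIn_of_mem hnm hB
    rw [← hpm] at hT
    exact hBT.trans_qStemIn hT

end CovPath
/-- Let `P` be an infinite path in covtree and suppose the
node `Γₙ` of `P` at level `n` is not a singleton.  Then there exist `m > n` and
an `m`-order `C` such that `C` is a certificate of `Γₙ` (the set of `n`-stems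
of `C` is exactly `Γₙ`) and `C` is an element of the node of `P` at level `m`. -/
theorem path_node_contains_certificate (P : CovPath) (n : ℕ)
    (hns : ¬ ∃ B : NOrder n, P.node n = {B}) :
    ∃ m : ℕ, n < m ∧ ∃ c : FinOrd m,
      (⟦c⟧ : NOrder m) ∈ P.node m ∧ stems n c = P.node n := by
  set Γ := (P.node n).toFinite.toFinset
  have hΓ : 0 < Γ.card := Finset.card_pos.mpr (by simpa [Γ] using P.nonempty n)
  obtain ⟨-, α, p, -, hp, hpm⟩ := P.isNode (n * Γ.card)
  have hpn := P.stems_eq_node (Nat.le_mul_of_pos_right n hΓ) hp hpm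
  obtain ⟨s, hs, hsm, hsΓ⟩ :=
    exists_isDownClosed_stems_inducedOrder (p := p) Γ fun B hB => by simpa [Γ, hpn] using hB
  have hc : stems n (inducedOrder p s) = P.node n :=
    (hs.stemIn_inducedOrder.stems_subset.trans hpn.subset).antisymm
      fun B hB => hsΓ B (by simpa [Γ] using hB)
  refine ⟨s.card, ?_, inducedOrder p s, ?_, hc⟩
  · by_contra! hsn
    obtain ⟨B, hB⟩ := P.nonempty n
    have hsub := stems_subsingleton_of_le (inducedOrder p s) hsn
    rw [hc] at hsub
    exact hns ⟨B, hsub.eq_singleton_of_mem hB⟩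
  · rw [← P.stems_eq_node hsm hp hpm]
    exact ⟨_, rfl, hs.stemIn_inducedOrder⟩
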